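/- Let m ≥ 1 and B be positive integers and a_1, …, a_{3m} be positive integers with B/4 < a_i < B/2 for all i and Σ_{i=1}^{3m} a_i = mB. If t is any schedule of the reduction tree T(a, B) (on any number of processors) whose peak memory is at most 3mB + 3m, then for every time step s at most three of the nodes N_1, …, N_{3m} satisfy t(N_i) = s. -/

import Mathlib

/-- A finite rooted in-tree: every node has a parent (the root is its own
parent), and a rank function witnesses that following parents strictly
decreases towards the root, so every node has a unique path to the root. -/
structure InTree where
  V : Type
  [fin : Fintype V]
  [deq : DecidableEq V]
  root : V
  parent : V → V
  parent_root : parent root = root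
  rk : V → ℕ
  rk_lt : ∀ v, v ≠ root → rk (parent v) < rk v
  rk_root : ∀ v, rk v = 0 → v = root

attribute [instance] InTree.fin InTree.deq

/-- A schedule of `T` on `p` processors: at most `p` tasks per unit time step,
and every non-root task finishes before its parent starts. -/
def InTree.IsSchedule (T : InTree) (p : ℕ) (t : T.V → ℕ) : Prop :=
  (∀ s : ℕ, (Finset.univ.filter (fun i => t i = s)).card ≤ p) ∧
  (∀ i : T.V, i ≠ T.root → t i + 1 ≤ t (T.parent i))

/-- Makespan of a schedule: `max_i (t i + 1)`. -/
def InTree.makespan (T : InTree) (t : T.V → ℕ) : ℕ :=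
  Finset.univ.sup (fun i => t i + 1)

/-- Memory used at step `s`: number of nodes `i` with `t i ≤ s` that are the
root or whose parent has not finished before step `s`. -/
def InTree.memAt (T : InTree) (t : T.V → ℕ) (s : ℕ) : ℕ :=
  (Finset.univ.filter (fun i : T.V => t i ≤ s ∧ (i = T.root ∨ s ≤ t (T.parent i)))).card

/-- Peak memory of a schedule: maximum memory usage over steps `0 ≤ s < makespan`. -/
def InTree.peakMemory (T : InTree) (t : T.V → ℕ) : ℕ :=
  (Finset.range (T.makespan t)).sup (T.memAt t)


/-- Node set of the 3-Partition reduction tree: a root, the nodes `N i`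
(`i < 3m`), and for each `i` the `3m * a i` leaf children of `N i`. -/
abbrev RedV (m : ℕ) (a : Fin (3*m) → ℕ) : Type :=
  Unit ⊕ Fin (3*m) ⊕ (Σ i : Fin (3*m), Fin (3*m * a i))

/-- The reduction tree `T(a, B)`: a root whose children are the `N i`,
each `N i` having exactly `3m * a i` leaf children. -/
def redTree (m : ℕ) (a : Fin (3*m) → ℕ) : InTree where
  V := RedV m a
  root := Sum.inl ()
  parent := fun v => match v with
    | Sum.inl _ => Sum.inl ()
    | Sum.inr (Sum.inl _) => Sum.inl ()
    | Sum.inr (Sum.inr ⟨i, _⟩) => Sum.inr (Sum.inl i)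
  parent_root := rfl
  rk := fun v => match v with
    | Sum.inl _ => 0
    | Sum.inr (Sum.inl _) => 1
    | Sum.inr (Sum.inr _) => 2
  rk_lt := by rintro (u | i | ⟨i, j⟩) h
              · cases u; exact absurd rfl h
              · simp
              · simp
  rk_root := by rintro (u | i | s) h
                · cases u; rfl
                · simp at h
                · simp at h

/-- The node `N i` of the reduction tree. -/
def Nnode (m : ℕ) (a : Fin (3*m) → ℕ) (i : Fin (3*m)) : (redTree m a).V :=
  Sum.inr (Sum.inl i)

/-!
If four nodes `N i` were computed at the same step `s`, then at step `s` the memory would hold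
these four outputs together with all `3m · ∑ a i` outputs of their leaf children. Since each
`a i > B/4`, four of them sum to more than `B`, so the memory would exceed `3mB + 3m`.
-/

open Finset

namespace InTree

variable (T : InTree) (t : T.V → ℕ)

lemma lt_makespan (i : T.V) : t i < T.makespan t :=
  Nat.lt_of_succ_le (le_sup (f := fun i => t i + 1) (mem_univ i))

lemma memAt_le_peakMemory {s : ℕ} (hs : s < T.makespan t) : T.memAt t s ≤ T.peakMemory t :=
  le_sup (mem_range.mpr hs)

lemma card_le_memAt (hprec : ∀ i, i ≠ T.root → t i + 1 ≤ t (T.parent i)) {s : ℕ}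
    (U : Finset T.V) (hU : ∀ i ∈ U, t i = s ∨ t (T.parent i) = s) : #U ≤ T.memAt t s := by
  refine card_le_card fun i hi => mem_filter.mpr ⟨mem_univ i, ?_⟩
  by_cases hroot : i = T.root
  · have hUi := hU i hi
    rw [hroot, T.parent_root, or_self] at hUi
    exact ⟨hroot ▸ hUi.le, Or.inl hroot⟩
  · have := hprec i hroot
    rcases hU i hi with h | h <;> exact ⟨by omega, Or.inr (by omega)⟩

end InTree

def redSubtrees (m : ℕ) (a : Fin (3*m) → ℕ) (S : Finset (Fin (3*m))) :
    Finset (RedV m a) :=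
  (S.disjSum (S.sigma fun _ => univ)).map Function.Embedding.inr

lemma card_redSubtrees (m : ℕ) (a : Fin (3*m) → ℕ) (S : Finset (Fin (3*m))) :
    #(redSubtrees m a S) = #S + 3*m * ∑ i ∈ S, a i := by
  simp [redSubtrees, card_sigma, mul_sum]

lemma card_add_sum_le_memAt (m : ℕ) (a : Fin (3*m) → ℕ) {p : ℕ} {t : (redTree m a).V → ℕ}
    (ht : (redTree m a).IsSchedule p t) {s : ℕ} {S : Finset (Fin (3*m))}
    (hS : ∀ i ∈ S, t (Nnode m a i) = s) :
    #S + 3*m * ∑ i ∈ S, a i ≤ (redTree m a).memAt t s := by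
  rw [← card_redSubtrees]
  refine (redTree m a).card_le_memAt t ht.2 _ fun (x : RedV m a) hx => ?_
  obtain ⟨y | ⟨i, j⟩, hy, rfl⟩ := mem_map.mp hx
  · exact Or.inl (hS y (inl_mem_disjSum.mp hy))
  · exact Or.inr (hS i (mem_sigma.mp (inr_mem_disjSum.mp hy)).1)

theorem stmt3_general (m B : ℕ) (a : Fin (3*m) → ℕ)
    (ha : ∀ i, B < 4 * a i ∧ 2 * a i < B)
    (p : ℕ) (t : (redTree m a).V → ℕ) (ht : (redTree m a).IsSchedule p t)
    (hmem : (redTree m a).peakMemory t ≤ 3*m*B + 3*m) :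
    ∀ s : ℕ, (Finset.univ.filter (fun i : Fin (3*m) => t (Nnode m a i) = s)).card ≤ 3 := by
  intro s
  by_contra! hcard
  obtain ⟨S, hSs, hS4⟩ := exists_subset_card_eq (s := univ.filter _) hcard
  have hS : ∀ i ∈ S, t (Nnode m a i) = s := fun i hi => (mem_filter.mp (hSs hi)).2
  obtain ⟨i₀, hi₀⟩ : S.Nonempty := card_pos.mp (by omega)
  have hs : s < (redTree m a).makespan t := hS i₀ hi₀ ▸ (redTree m a).lt_makespan t _
  have hmemS := (card_add_sum_le_memAt m a ht hS).trans
    (((redTree m a).memAt_le_peakMemory t hs).trans hmem)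
  have hsumS : B + 1 ≤ ∑ i ∈ S, a i := by
    have := card_nsmul_le_sum S (fun i => 4 * a i) (B + 1) fun i _ => (ha i).1
    rw [hS4, smul_eq_mul, ← mul_sum] at this
    omega
  have := Nat.mul_le_mul_left (3*m) hsumS
  rw [hS4] at hmemS
  nlinarith

/-- For any schedule of the reduction tree `T(a, B)` (on any number of
processors) whose peak memory is at most `3mB + 3m`, at most three of the
nodes `N i` are processed at any given time step. -/
theorem stmt3 (m B : ℕ) (hm : 1 ≤ m) (hB : 1 ≤ B) (a : Fin (3*m) → ℕ)
    (ha : ∀ i, B < 4 * a i ∧ 2 * a i < B) (hsum : ∑ i, a i = m * B)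
    (p : ℕ) (t : (redTree m a).V → ℕ) (ht : (redTree m a).IsSchedule p t)
    (hmem : (redTree m a).peakMemory t ≤ 3*m*B + 3*m) :
    ∀ s : ℕ, (Finset.univ.filter (fun i : Fin (3*m) => t (Nnode m a i) = s)).card ≤ 3 :=
  stmt3_general m B a ha p t ht hmem
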